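/- Let $k \geq 2$, let $m_1, \ldots, m_k$ be positive integers with $n = \sum_{i=1}^{k} m_i$, and let $f : \{1, \ldots, n\} \to \{1, \ldots, k\}$ be the 'block label' function, i.e., $f(j) = i$ if $\sum_{l < i} m_l < j \leq \sum_{l \leq i} m_l$. Define $x_j = -f(j)/k \in \mathbb{Q}$ for each $j$. Then the number of ordered pairs $(i,j)$ with $1 \leq i, j \leq n$, $i \neq j$, and $x_i - x_j - \frac{1}{k} \in \mathbb{Z}$, equals $\sum_{i=1}^{k-1} m_i m_{i+1} + m_k m_1$. -/

import Mathlib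

/-!
Write `P i = m 1 + ⋯ + m i`; the `i`-th block is `(P (i - 1), P i]`, it has `m i` elements and
`f` is constant `i` on it. For labels `i, i' ∈ [1, k]` the condition reads `k ∣ i' - i - 1`, and
as `i' - i - 1 ∈ [-k, k - 2]` this means that `i'` is the cyclic successor of `i`. In particular
the two labels differ, so `p.1 ≠ p.2` is automatic, and counting the pairs by the label of their
first entry gives `∑ i, m i * m (succ i)`.
-/

open scoped Classical

open Finset

namespace Finset

theorem card_filter_product_eq_sum_mul {α β : Type*} [DecidableEq β] {s : Finset α}
    {t : Finset β} {f : α → β} (hf : (s : Set α).MapsTo f t) (σ : β → β)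
    (p : α × α → Prop) [DecidablePred p]
    (hp : ∀ a ∈ s, ∀ b ∈ s, p (a, b) ↔ f b = σ (f a)) :
    #{q ∈ s ×ˢ s | p q} = ∑ i ∈ t, #{a ∈ s | f a = i} * #{b ∈ s | f b = σ i} := by
  have hmaps : ((({q ∈ s ×ˢ s | p q}) : Finset (α × α)) : Set (α × α)).MapsTo
      (fun q => f q.1) t := fun q hq => hf (mem_product.mp (mem_filter.mp hq).1).1
  rw [card_eq_sum_card_fiberwise hmaps]
  refine sum_congr rfl fun i _ => ?_
  rw [← card_product]
  congr 1
  ext ⟨a, b⟩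
  simp only [mem_filter, mem_product]
  constructor
  · rintro ⟨⟨⟨ha, hb⟩, hab⟩, rfl⟩
    exact ⟨⟨ha, rfl⟩, hb, (hp a ha b hb).mp hab⟩
  · rintro ⟨⟨ha, rfl⟩, hb, hab⟩
    exact ⟨⟨⟨ha, hb⟩, (hp a ha b hb).mpr hab⟩, rfl⟩

end Finset

def partialSum (m : ℕ → ℕ) (i : ℕ) : ℕ := ∑ l ∈ Icc 1 i, m l

section partialSum

variable (m : ℕ → ℕ)

theorem partialSum_zero : partialSum m 0 = 0 := rfl

theorem partialSum_succ (i : ℕ) : partialSum m (i + 1) = partialSum m i + m (i + 1) :=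
  sum_Icc_succ_top (by omega) m

theorem partialSum_mono : Monotone (partialSum m) := fun _ _ hij =>
  sum_le_sum_of_subset (Icc_subset_Icc le_rfl hij)

theorem card_Ioc_partialSum {i : ℕ} (hi : 1 ≤ i) :
    #(Ioc (partialSum m (i - 1)) (partialSum m i)) = m i := by
  obtain ⟨i, rfl⟩ := Nat.exists_eq_add_of_le' hi
  rw [Nat.card_Ioc, Nat.add_sub_cancel, partialSum_succ]
  omega

theorem Ioc_partialSum_subset {i k : ℕ} (hi : i ∈ Icc 1 k) :
    Ioc (partialSum m (i - 1)) (partialSum m i) ⊆ Icc 1 (partialSum m k) := by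
  rw [mem_Icc] at hi
  intro j hj
  rw [mem_Ioc] at hj
  have := partialSum_mono m hi.2
  rw [mem_Icc]
  omega

theorem exists_mem_Ioc_partialSum {k j : ℕ} (hj : j ∈ Icc 1 (partialSum m k)) :
    ∃ i ∈ Icc 1 k, j ∈ Ioc (partialSum m (i - 1)) (partialSum m i) := by
  induction k with
  | zero => simp [partialSum_zero] at hj
  | succ k ih =>
    by_cases hjk : j ≤ partialSum m k
    · obtain ⟨i, hi, hji⟩ := ih (mem_Icc.mpr ⟨(mem_Icc.mp hj).1, hjk⟩)
      exact ⟨i, Icc_subset_Icc le_rfl (Nat.le_succ k) hi, hji⟩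
    · exact ⟨k + 1, by simp, mem_Ioc.mpr ⟨by simpa using hjk, (mem_Icc.mp hj).2⟩⟩

end partialSum

def IsBlockLabeling (m : ℕ → ℕ) (k : ℕ) (f : ℕ → ℕ) : Prop :=
  ∀ i ∈ Icc 1 k, ∀ j, partialSum m (i - 1) < j → j ≤ partialSum m i → f j = i

namespace IsBlockLabeling

variable {m : ℕ → ℕ} {k : ℕ} {f : ℕ → ℕ} (hf : IsBlockLabeling m k f)
include hf

theorem mapsTo :
    ((Icc 1 (partialSum m k) : Finset ℕ) : Set ℕ).MapsTo f (Icc 1 k) := by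
  intro j hj
  obtain ⟨i, hi, hji⟩ := exists_mem_Ioc_partialSum m hj
  rw [mem_Ioc] at hji
  rwa [hf i hi j hji.1 hji.2]

theorem filter_eq_Ioc {i : ℕ} (hi : i ∈ Icc 1 k) :
    {j ∈ Icc 1 (partialSum m k) | f j = i} = Ioc (partialSum m (i - 1)) (partialSum m i) := by
  ext j
  rw [mem_filter]
  constructor
  · rintro ⟨hj, rfl⟩
    obtain ⟨i', hi', hji'⟩ := exists_mem_Ioc_partialSum m hj
    rw [mem_Ioc] at hji'
    rwa [hf i' hi' j hji'.1 hji'.2, mem_Ioc]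
  · intro hji
    exact ⟨Ioc_partialSum_subset m hi hji, hf i hi j (mem_Ioc.mp hji).1 (mem_Ioc.mp hji).2⟩

end IsBlockLabeling

def cyclicSucc (k i : ℕ) : ℕ := if i = k then 1 else i + 1

theorem cyclicSucc_ne_self {k : ℕ} (hk : 2 ≤ k) (i : ℕ) : cyclicSucc k i ≠ i := by
  unfold cyclicSucc
  split_ifs <;> omega

theorem cyclicSucc_mem_Icc {k i : ℕ} (hi : i ∈ Icc 1 k) : cyclicSucc k i ∈ Icc 1 k := by
  rw [mem_Icc] at hi ⊢
  unfold cyclicSucc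
  split_ifs <;> omega

theorem sum_Icc_cyclicSucc {M : Type*} [AddCommMonoid M] {k : ℕ} (hk : 1 ≤ k)
    (g : ℕ → ℕ → M) :
    ∑ i ∈ Icc 1 k, g i (cyclicSucc k i) = ∑ i ∈ Icc 1 (k - 1), g i (i + 1) + g k 1 := by
  obtain ⟨k, rfl⟩ := Nat.exists_eq_add_of_le' hk
  rw [sum_Icc_succ_top (by omega), Nat.add_sub_cancel, cyclicSucc, if_pos rfl]
  congr 1
  refine sum_congr rfl fun i hi => ?_
  rw [cyclicSucc, if_neg (by rw [mem_Icc] at hi; omega)]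

-- `i' - i - 1 ∈ [-k, k - 2]`, so `k` divides it exactly when it is `0` or `-k`.
theorem natCast_dvd_sub_sub_one_iff_eq_cyclicSucc {k i i' : ℕ} (hk : 2 ≤ k) (hi : i ∈ Icc 1 k)
    (hi' : i' ∈ Icc 1 k) : (k : ℤ) ∣ (i' : ℤ) - i - 1 ↔ i' = cyclicSucc k i := by
  rw [mem_Icc] at hi hi'
  unfold cyclicSucc
  constructor
  · rintro ⟨z, hz⟩
    have hz : z = 0 ∨ z = -1 := by
      have : z ≤ 0 := by nlinarith
      have : -1 ≤ z := by nlinarith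
      omega
    rcases hz with rfl | rfl <;> split_ifs <;> omega
  · split_ifs with h
    · rintro rfl
      exact ⟨-1, by subst h; ring⟩
    · rintro rfl
      exact ⟨0, by push_cast; ring⟩

theorem Rat.exists_intCast_eq_div_iff {a k : ℤ} (hk : k ≠ 0) :
    (∃ z : ℤ, (a : ℚ) / k = z) ↔ k ∣ a := by
  constructor
  · rintro ⟨z, hz⟩
    rw [div_eq_iff (by exact_mod_cast hk)] at hz
    exact ⟨z, by rw [mul_comm]; exact_mod_cast hz⟩
  · rintro ⟨c, rfl⟩
    exact ⟨c, by push_cast; field_simp⟩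

theorem stmt15_general (k n : ℕ) (hk : 2 ≤ k) (m : ℕ → ℕ)
    (hn : n = ∑ i ∈ Finset.Icc 1 k, m i) (f : ℕ → ℕ)
    (hf : ∀ i ∈ Finset.Icc 1 k, ∀ j : ℕ,
      (∑ l ∈ Finset.Icc 1 (i - 1), m l) < j → j ≤ (∑ l ∈ Finset.Icc 1 i, m l) →
        f j = i) :
    (((Finset.Icc 1 n) ×ˢ (Finset.Icc 1 n)).filter
      (fun p : ℕ × ℕ => p.1 ≠ p.2 ∧
        ∃ z : ℤ, (-(f p.1 : ℚ) / k) - (-(f p.2 : ℚ) / k) - 1 / k = (z : ℚ))).card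
    = (∑ i ∈ Finset.Icc 1 (k - 1), m i * m (i + 1)) + m k * m 1 := by
  change n = partialSum m k at hn
  subst hn
  replace hf : IsBlockLabeling m k f := hf
  have hmaps := hf.mapsTo
  have hadjacent : ∀ a ∈ Icc 1 (partialSum m k), ∀ b ∈ Icc 1 (partialSum m k),
      (a ≠ b ∧ ∃ z : ℤ, (-(f a : ℚ) / k) - (-(f b : ℚ) / k) - 1 / k = (z : ℚ)) ↔
        f b = cyclicSucc k (f a) := by
    intro a ha b hb
    have hdiff : (-(f a : ℚ) / k) - (-(f b : ℚ) / k) - 1 / k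
        = (((f b : ℤ) - f a - 1 : ℤ) : ℚ) / (k : ℤ) := by push_cast; ring
    rw [hdiff, Rat.exists_intCast_eq_div_iff (by omega),
      natCast_dvd_sub_sub_one_iff_eq_cyclicSucc hk (hmaps ha) (hmaps hb)]
    refine ⟨And.right, fun hab => ⟨?_, hab⟩⟩
    rintro rfl
    exact cyclicSucc_ne_self hk _ hab.symm
  rw [card_filter_product_eq_sum_mul hmaps (cyclicSucc k) _ hadjacent,
    ← sum_Icc_cyclicSucc (g := fun i j => m i * m j) (by omega)]
  refine sum_congr rfl fun i hi => ?_
  rw [hf.filter_eq_Ioc hi, hf.filter_eq_Ioc (cyclicSucc_mem_Icc hi),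
    card_Ioc_partialSum m (mem_Icc.mp hi).1,
    card_Ioc_partialSum m (mem_Icc.mp (cyclicSucc_mem_Icc hi)).1]

theorem stmt15 (k n : ℕ) (hk : 2 ≤ k) (m : ℕ → ℕ)
    (hm : ∀ i ∈ Finset.Icc 1 k, 1 ≤ m i)
    (hn : n = ∑ i ∈ Finset.Icc 1 k, m i) (f : ℕ → ℕ)
    (hf : ∀ i ∈ Finset.Icc 1 k, ∀ j : ℕ,
      (∑ l ∈ Finset.Icc 1 (i - 1), m l) < j → j ≤ (∑ l ∈ Finset.Icc 1 i, m l) →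
        f j = i) :
    (((Finset.Icc 1 n) ×ˢ (Finset.Icc 1 n)).filter
      (fun p : ℕ × ℕ => p.1 ≠ p.2 ∧
        ∃ z : ℤ, (-(f p.1 : ℚ) / k) - (-(f p.2 : ℚ) / k) - 1 / k = (z : ℚ))).card
    = (∑ i ∈ Finset.Icc 1 (k - 1), m i * m (i + 1)) + m k * m 1 :=
  stmt15_general k n hk m hn f hf
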